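/- arXiv:1410.2640 — 5 statements merged into one kernel-verified Lean document; each statement's English description precedes it below -/
import Mathlib

section
/- There is a constant c > 0 with the following property. Let d be a positive integer, let ε be a real number with 1/d ≤ ε ≤ 1/8, and let M be a natural number. Suppose that for every number of rows n there exists an (ε, M)-Itemset-Frequency-Indicator sketching scheme for pairs on d items and n rows (with randomized encoder succeeding with probability at least 3/4). Then M ≥ c · (d/ε) · log(ε·d). -/
/-- The frequency of an itemset `T` in a database `D` with `n` rows over `d` items:
the fraction of rows in which every item of `T` occurs. -/
noncomputable def freq {n d : ℕ} (D : Fin n → Fin d → Bool) (T : Finset (Fin d)) : ℝ :=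
  ((Finset.univ.filter (fun i : Fin n => ∀ j ∈ T, D i j = true)).card : ℝ) / n

/-- The decoder `Dec` answers all pairwise queries correctly on sketch `s` for database `D`
at threshold `ε`. -/
def DecCorrect {n d : ℕ} {σ : Type*} (ε : ℝ) (D : Fin n → Fin d → Bool)
    (Dec : σ → Fin d → Fin d → Bool) (s : σ) : Prop :=
  ∀ a b : Fin d, a ≠ b →
    (freq D {a, b} ≥ ε → Dec s a b = true) ∧
    (freq D {a, b} ≤ ε / 2 → Dec s a b = false)

/-- An `(ε, M)`-Itemset-Frequency-Indicator sketching scheme for pairs on `d` items and `n`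
rows: a randomized encoder into `M`-bit sketches and a decoder such that, for every database,
with probability at least `3/4` over the sketch, all pairwise queries are answered correctly. -/
def IFIScheme (d n M : ℕ) (ε : ℝ) : Prop :=
  ∃ (Enc : (Fin n → Fin d → Bool) → PMF (Fin (2 ^ M)))
    (Dec : Fin (2 ^ M) → Fin d → Fin d → Bool),
    ∀ D : Fin n → Fin d → Bool,
      (3 / 4 : ENNReal) ≤ (Enc D).toOuterMeasure {s | DecCorrect ε D Dec s}

/-!
Fix an alphabet `Fin K` and take as rows all words `g : Fin L → Fin K`. To a family `F` of
`R` subsets of `Fin L`, each of size `t`, attach the database on `L + R` items in which item `i`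
records `g i = 0` and item `L + b` records that `g` vanishes somewhere on `F b`. If `i ∈ F b`
the pair `{i, L + b}` has frequency `1 / K`, while if `i ∉ F b` a union bound over `F b` gives
frequency at most `t / K ^ 2`. Two different families differ on some such pair, so for
`1 / K ≥ ε ≥ 2 t / K ^ 2` a correct sketch determines the family and `(L.choose t) ^ R ≤ 2 ^ M`.
With `K ≈ 1 / ε`, `t ≈ 1 / (8 ε)` and `L, R ≈ d / 2` we have `L.choose t ≥ (ε d) ^ t`, whence
`M ≥ R t log (ε d) ≥ d log (ε d) / (32 ε)`.
-/

open Finset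

-- The decidability instance is a parameter: for `α = Fin L` instance search decides the `∀` by
-- `Nat.decidableForallFin` rather than `Fintype.decidableForallFintype`.
lemma card_filter_forall_eq_div_card {α β : Type*} [Fintype α] [DecidableEq α] [Fintype β]
    [DecidableEq β] (s : Finset α) (z : β) [DecidablePred fun g : α → β => ∀ a ∈ s, g a = z] :
    (#{g : α → β | ∀ a ∈ s, g a = z} : ℝ) / Fintype.card (α → β) = 1 / Fintype.card β ^ #s := by
  have hpi : ({g : α → β | ∀ a ∈ s, g a = z} : Finset (α → β)) =
      Fintype.piFinset fun a => if a ∈ s then {z} else univ := by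
    ext g
    simp only [mem_filter, mem_univ, true_and, Fintype.mem_piFinset]
    refine forall_congr' fun a => ?_
    split_ifs with ha <;> simp [ha]
  have hcard : #{g : α → β | ∀ a ∈ s, g a = z} * Fintype.card β ^ #s =
      Fintype.card β ^ Fintype.card α := by
    rw [hpi, Fintype.card_piFinset]
    simp only [apply_ite card, card_singleton, card_univ, prod_ite, prod_const_one, one_mul,
      prod_const]
    rw [← pow_add, filter_not, filter_mem_eq_inter, univ_inter,
      card_sdiff_add_card_eq_card (subset_univ s), card_univ]
  have hβ : (0 : ℝ) < Fintype.card β := by exact_mod_cast Fintype.card_pos_iff.2 ⟨z⟩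
  rw [Fintype.card_fun, Nat.cast_pow, div_eq_div_iff (pow_pos hβ _).ne' (pow_pos hβ _).ne',
    one_mul]
  exact_mod_cast hcard

noncomputable def databaseOfRows {ρ : Type*} [Fintype ρ] {d : ℕ} (row : ρ → Fin d → Bool) :
    Fin (Fintype.card ρ) → Fin d → Bool :=
  fun x => row ((Fintype.equivFin ρ).symm x)

lemma freq_databaseOfRows {ρ : Type*} [Fintype ρ] {d : ℕ} (row : ρ → Fin d → Bool)
    (T : Finset (Fin d)) :
    freq (databaseOfRows row) T = #{r | ∀ j ∈ T, row r j = true} / Fintype.card ρ := by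
  rw [freq, card_equiv (Fintype.equivFin ρ).symm (t := {r | ∀ j ∈ T, row r j = true})
    (fun _ => by simp only [mem_filter, mem_univ, true_and]; rfl)]

lemma IFIScheme.card_le_two_pow {d n M : ℕ} {ε : ℝ} {ι : Type*} [Fintype ι]
    (h : IFIScheme d n M ε) (DB : ι → Fin n → Fin d → Bool)
    (hsep : Pairwise fun u v => ∃ a b : Fin d, a ≠ b ∧ ε ≤ freq (DB u) {a, b} ∧
      freq (DB v) {a, b} ≤ ε / 2) :
    Fintype.card ι ≤ 2 ^ M := by
  obtain ⟨Enc, Dec, hEnc⟩ := h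
  have hcorrect : ∀ u, ∃ s, DecCorrect ε (DB u) Dec s := by
    intro u
    by_contra! hnone
    have hprob := hEnc (DB u)
    rw [show {s | DecCorrect ε (DB u) Dec s} = ∅ from Set.eq_empty_of_forall_notMem hnone] at hprob
    simp at hprob
  choose s hs using hcorrect
  have hinj : Function.Injective s := by
    intro u v huv
    by_contra huv'
    obtain ⟨a, b, hab, hu, hv⟩ := hsep huv'
    have := (hs u a b hab).1 hu
    simp [huv, (hs v a b hab).2 hv] at this
  simpa using Fintype.card_le_of_injective s hinj

section HardFamily

variable {β : Type*} [Fintype β] [DecidableEq β] (z : β) {L R : ℕ}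

def hardRow (F : Fin R → Finset (Fin L)) (g : Fin L → β) : Fin (L + R) → Bool :=
  Fin.append (fun i => decide (g i = z)) (fun b => decide (∃ i ∈ F b, g i = z))

lemma freq_hardRow_pair (F : Fin R → Finset (Fin L)) (i : Fin L) (b : Fin R) :
    freq (databaseOfRows (hardRow z F)) {Fin.castAdd R i, Fin.natAdd L b} =
      #{g : Fin L → β | g i = z ∧ ∃ i' ∈ F b, g i' = z} / Fintype.card (Fin L → β) := by
  simp [freq_databaseOfRows, hardRow]

lemma freq_hardRow_pair_of_mem {F : Fin R → Finset (Fin L)} {i : Fin L} {b : Fin R}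
    (hi : i ∈ F b) :
    freq (databaseOfRows (hardRow z F)) {Fin.castAdd R i, Fin.natAdd L b} =
      1 / Fintype.card β := by
  rw [freq_hardRow_pair, ← pow_one (Fintype.card β : ℝ), ← card_singleton i,
    ← card_filter_forall_eq_div_card {i} z]
  congr 3
  ext g
  simpa using fun hg => ⟨i, hi, hg⟩

lemma freq_hardRow_pair_le_of_notMem {F : Fin R → Finset (Fin L)} {i : Fin L} {b : Fin R}
    (hi : i ∉ F b) :
    freq (databaseOfRows (hardRow z F)) {Fin.castAdd R i, Fin.natAdd L b} ≤
      #(F b) / Fintype.card β ^ 2 := by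
  have hunion : ({g : Fin L → β | g i = z ∧ ∃ i' ∈ F b, g i' = z} : Finset _) ⊆
      (F b).biUnion fun i' => {g | ∀ a ∈ ({i, i'} : Finset (Fin L)), g a = z} := by
    intro g
    simp only [mem_filter, mem_univ, true_and, mem_biUnion, mem_insert, mem_singleton,
      forall_eq_or_imp, forall_eq]
    rintro ⟨hgi, i', hi', hgi'⟩
    exact ⟨i', hi', hgi, hgi'⟩
  have hpair : ∀ i' ∈ F b, #({i, i'} : Finset (Fin L)) = 2 := fun i' hi' =>
    card_pair fun h => hi (h ▸ hi')
  rw [freq_hardRow_pair]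
  calc (#{g : Fin L → β | g i = z ∧ ∃ i' ∈ F b, g i' = z} : ℝ) / Fintype.card (Fin L → β)
      ≤ (∑ i' ∈ F b, (#{g : Fin L → β | ∀ a ∈ ({i, i'} : Finset (Fin L)), g a = z} : ℝ)) /
          Fintype.card (Fin L → β) := by
        gcongr
        exact_mod_cast (card_le_card hunion).trans card_biUnion_le
    _ = ∑ i' ∈ F b, 1 / (Fintype.card β : ℝ) ^ 2 := by
        rw [sum_div]
        refine sum_congr rfl fun i' hi' => ?_
        rw [card_filter_forall_eq_div_card, hpair i' hi']
    _ = #(F b) / Fintype.card β ^ 2 := by rw [sum_const, nsmul_eq_mul, mul_one_div]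

lemma choose_pow_le_two_pow_of_IFIScheme [Nonempty β] {M t : ℕ} {ε : ℝ}
    (h : IFIScheme (L + R) (Fintype.card (Fin L → β)) M ε) (hε : ε ≤ 1 / Fintype.card β)
    (ht : (t : ℝ) / Fintype.card β ^ 2 ≤ ε / 2) :
    L.choose t ^ R ≤ 2 ^ M := by
  obtain ⟨z⟩ := ‹Nonempty β›
  have hsep : Pairwise fun F F' : Fin R → {S : Finset (Fin L) // #S = t} =>
      ∃ a b : Fin (L + R), a ≠ b ∧
        ε ≤ freq (databaseOfRows (hardRow z fun b => (F b).1)) {a, b} ∧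
        freq (databaseOfRows (hardRow z fun b => (F' b).1)) {a, b} ≤ ε / 2 := by
    intro F F' hFF'
    obtain ⟨b, hb⟩ := Function.ne_iff.1 hFF'
    obtain ⟨i, hi, hi'⟩ := not_subset.1 fun hsub =>
      hb (Subtype.ext (eq_of_subset_of_card_le hsub ((F' b).2.trans (F b).2.symm).le))
    refine ⟨Fin.castAdd R i, Fin.natAdd L b, by simp [Fin.ext_iff]; omega, ?_, ?_⟩
    · rwa [freq_hardRow_pair_of_mem z hi]
    · exact (freq_hardRow_pair_le_of_notMem z hi').trans (by rwa [(F' b).2])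
  simpa [Fintype.card_finset_len] using IFIScheme.card_le_two_pow h _ hsep

end HardFamily

lemma pow_le_choose_of_mul_le {x : ℝ} (hx : 0 ≤ x) {n k : ℕ} (h : x * k ≤ n + 1 - k) :
    x ^ k ≤ n.choose k := by
  rcases k.eq_zero_or_pos with rfl | hk
  · simp
  have hk' : (0 : ℝ) < k := by exact_mod_cast hk
  have hkn : k ≤ n + 1 := by
    by_contra! hlt
    have : (n : ℝ) + 1 < k := by exact_mod_cast hlt
    nlinarith
  have h' : x * k ≤ ((n + 1 - k : ℕ) : ℝ) := by rw [Nat.cast_sub hkn]; push_cast; exact h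
  calc x ^ k = (x * k) ^ k / (k : ℝ) ^ k := by rw [mul_pow, mul_div_cancel_right₀ _ (by positivity)]
    _ ≤ ((n + 1 - k : ℕ) : ℝ) ^ k / k.factorial := by
        gcongr
        exact_mod_cast Nat.factorial_le_pow k
    _ ≤ n.choose k := Nat.pow_le_choose k n

lemma mul_log_le_of_pow_le_two_pow {x : ℝ} (hx : 1 ≤ x) {n M : ℕ} (h : x ^ n ≤ 2 ^ M) :
    n * Real.log x ≤ M := by
  have hlog := Real.log_le_log (by positivity) h
  rw [Real.log_pow, Real.log_pow] at hlog
  nlinarith [Real.log_two_lt_d9]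

lemma exists_hardFamily_parameters {ε : ℝ} (hε : 0 < ε) (hε8 : ε ≤ 1 / 8) :
    ∃ K t : ℕ, 0 < K ∧ ε ≤ 1 / K ∧ (t : ℝ) / K ^ 2 ≤ ε / 2 ∧ 1 / (16 * ε) ≤ t ∧
      ε * t ≤ 1 / 8 := by
  have h8 : 8 ≤ 1 / ε := by rw [le_div_iff₀ hε]; linarith
  have hK := Nat.div_two_lt_floor (a := 1 / ε) (by linarith)
  have ht := Nat.div_two_lt_floor (a := 1 / (8 * ε))
    (by rw [le_div_iff₀ (by positivity)]; linarith)
  have hKpos : (0 : ℝ) < ⌊1 / ε⌋₊ := by linarith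
  refine ⟨⌊1 / ε⌋₊, ⌊1 / (8 * ε)⌋₊, by exact_mod_cast hKpos, ?_, ?_, ?_, ?_⟩
  · rw [le_div_iff₀ hKpos, mul_comm, ← le_div_iff₀ hε]
    exact Nat.floor_le (by positivity)
  · rw [div_le_iff₀ (by positivity)]
    calc (⌊1 / (8 * ε)⌋₊ : ℝ) ≤ 1 / (8 * ε) := Nat.floor_le (by positivity)
      _ = ε / 2 * (1 / ε / 2) ^ 2 := by field_simp; ring
      _ ≤ ε / 2 * (⌊1 / ε⌋₊ : ℝ) ^ 2 := by gcongr
  · linarith [show 1 / (16 * ε) = 1 / (8 * ε) / 2 by ring]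
  · rw [← le_div_iff₀' hε, div_div]
    exact Nat.floor_le (by positivity)

theorem itemset_frequency_indicator_lower_bound :
    ∃ c : ℝ, c > 0 ∧
      ∀ (d : ℕ) (ε : ℝ) (M : ℕ), 0 < d → 1 / (d : ℝ) ≤ ε → ε ≤ 1 / 8 →
        (∀ n : ℕ, IFIScheme d n M ε) →
        (M : ℝ) ≥ c * ((d : ℝ) / ε) * Real.log (ε * d) := by
  refine ⟨1 / 32, by norm_num, fun d ε M hd hεd hε8 hscheme => ?_⟩
  have hd' : (0 : ℝ) < d := by exact_mod_cast hd
  have hε : 0 < ε := (one_div_pos.2 hd').trans_le hεd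
  have hεd1 : 1 ≤ ε * d := by rwa [div_le_iff₀ hd'] at hεd
  obtain ⟨K, t, hK, hεK, htK, ht16, hεt⟩ := exists_hardFamily_parameters hε hε8
  obtain ⟨L, R, rfl, hL, hR⟩ : ∃ L R : ℕ, d = L + R ∧ (d : ℝ) ≤ 2 * L + 1 ∧ (d : ℝ) ≤ 2 * R :=
    ⟨d / 2, d - d / 2, by omega, by exact_mod_cast (by omega : d ≤ 2 * (d / 2) + 1),
      by exact_mod_cast (by omega : d ≤ 2 * (d - d / 2))⟩
  have : Nonempty (Fin K) := ⟨⟨0, hK⟩⟩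
  have hcount : L.choose t ^ R ≤ 2 ^ M :=
    choose_pow_le_two_pow_of_IFIScheme (β := Fin K) (hscheme _) (by simpa using hεK)
      (by simpa using htK)
  have hchoose : (ε * (L + R : ℕ)) ^ t ≤ L.choose t :=
    pow_le_choose_of_mul_le (by positivity) <| by
      push_cast at hεd1 hL ⊢
      nlinarith [mul_le_mul_of_nonneg_left hεd1 t.cast_nonneg,
        mul_le_mul_of_nonneg_left hεt (by positivity : (0 : ℝ) ≤ L + R)]
  have hlog := mul_log_le_of_pow_le_two_pow hεd1 (n := t * R) (M := M) <| by
    rw [pow_mul]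
    exact (pow_le_pow_left₀ (by positivity) hchoose R).trans (by exact_mod_cast hcount)
  refine le_trans ?_ hlog
  gcongr
  · exact Real.log_nonneg hεd1
  · push_cast at hR ⊢
    calc 1 / 32 * ((L + R : ℝ) / ε) = 1 / (16 * ε) * ((L + R) / 2) := by field_simp; ring
      _ ≤ t * R := by gcongr; linarith
end

section
/- There is a constant c > 0 with the following property. Let d ≥ 2 be an integer and let M be a natural number. Suppose that for every number of rows n there exists a (1/8, M)-Itemset-Frequency-Indicator sketching scheme for pairs on d items and n rows (with randomized encoder succeeding with probability at least 3/4). Then M ≥ c · d · log d. -/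
/-
Rows drawn from `{0,1,2,3}^k` with item `t` present exactly when coordinate `c t` is `0`, for a
map `c` from items to coordinates, give every pair frequency `1/4` if `c` identifies it and
`1/16` otherwise. So a correct sketch determines the kernel of `c`, and at most `2^M` kernels
can occur. Pairing item `i` with item `m + σ i` for the `m!` permutations `σ` of `Fin m`
yields `m!` distinct kernels, so `m! ≤ 2^M`; with `m = 2⌊d/4⌋` this is `M = Ω(d log d)`, while
for small `d` two kernels already force `M ≥ 1`.
-/

open Finset Real
open scoped Nat

theorem card_filter_forall_mem_eq {ι α : Type*} [Fintype ι] [DecidableEq ι] [Fintype α]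
    [DecidableEq α] (K : Finset ι) (x : α) :
    #{r : ι → α | ∀ k ∈ K, r k = x} = Fintype.card α ^ (Fintype.card ι - #K) := by
  have hpi : ({r : ι → α | ∀ k ∈ K, r k = x} : Finset _) =
      Fintype.piFinset fun k => if k ∈ K then {x} else univ := by
    ext r
    simp only [mem_filter, mem_univ, true_and, Fintype.mem_piFinset]
    refine forall_congr' fun k => ?_
    split_ifs <;> simp [*]
  simp only [hpi, Fintype.card_piFinset, apply_ite card, card_singleton, card_univ]
  rw [prod_ite, prod_const_one, one_mul, prod_const, filter_not, card_sdiff, filter_mem_eq_inter,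
    univ_inter, card_univ, inter_univ]

def coordDB {d k : ℕ} (q : ℕ) [NeZero q] (c : Fin d → Fin k) : Fin (q ^ k) → Fin d → Bool :=
  fun r t => decide (finFunctionFinEquiv.symm r (c t) = 0)

theorem freq_coordDB {d k q : ℕ} [NeZero q] (c : Fin d → Fin k) (T : Finset (Fin d)) :
    freq (coordDB q c) T = (1 / q : ℝ) ^ #(T.image c) := by
  have hrows : ({r | ∀ t ∈ T, coordDB q c r t = true} : Finset (Fin (q ^ k))) =
      ({r | ∀ l ∈ T.image c, r l = 0} : Finset (Fin k → Fin q)).map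
        finFunctionFinEquiv.toEmbedding := by
    ext r
    simp [coordDB]
  have hcount : #{r : Fin k → Fin q | ∀ l ∈ T.image c, r l = 0} = q ^ (k - #(T.image c)) := by
    convert card_filter_forall_mem_eq (T.image c) (0 : Fin q) <;> simp
  have hK : #(T.image c) ≤ k := (card_le_univ _).trans_eq (Fintype.card_fin k)
  have hq : (q : ℝ) ≠ 0 := NeZero.ne _
  rw [freq, hrows, card_map, hcount, Nat.cast_pow, Nat.cast_pow, pow_sub₀ _ hq hK, one_div_pow]
  field_simp

section coordDB
variable {d k q : ℕ} [NeZero q] {c : Fin d → Fin k} {a t : Fin d}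

theorem freq_coordDB_pair_of_eq (h : c a = c t) : freq (coordDB q c) {a, t} = 1 / q := by
  rw [freq_coordDB, image_insert, image_singleton, h, insert_eq_of_mem (mem_singleton_self _),
    card_singleton, pow_one]

theorem freq_coordDB_pair_of_ne (h : c a ≠ c t) : freq (coordDB q c) {a, t} = (1 / q) ^ 2 := by
  rw [freq_coordDB, image_insert, image_singleton, card_pair h]

end coordDB

theorem DecCorrect.apply_eq_true_iff_coordDB {d k : ℕ} {σ : Type*} {Dec : σ → Fin d → Fin d → Bool}
    {s : σ} {c : Fin d → Fin k} (hs : DecCorrect (1 / 8) (coordDB 4 c) Dec s) {a t : Fin d}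
    (h : a ≠ t) : Dec s a t = true ↔ c a = c t := by
  refine ⟨fun hDec => ?_, fun hc => (hs a t h).1 (by rw [freq_coordDB_pair_of_eq hc]; norm_num)⟩
  by_contra hc
  have := (hs a t h).2 (by rw [freq_coordDB_pair_of_ne hc]; norm_num)
  simp_all

theorem IFIScheme.exists_decoder {d n M : ℕ} {ε : ℝ} (h : IFIScheme d n M ε) :
    ∃ Dec : Fin (2 ^ M) → Fin d → Fin d → Bool,
      ∀ D : Fin n → Fin d → Bool, ∃ s, DecCorrect ε D Dec s := by
  obtain ⟨Enc, Dec, hE⟩ := h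
  refine ⟨Dec, fun D => (Set.nonempty_iff_ne_empty (s := {s | DecCorrect ε D Dec s})).mpr
    fun hempty => ?_⟩
  have := hE D
  rw [hempty, MeasureTheory.measure_empty] at this
  norm_num at this

theorem IFIScheme.card_le_of_injective_ker {ι : Type*} [Fintype ι] {d k M : ℕ}
    (h : IFIScheme d (4 ^ k) M (1 / 8)) (c : ι → Fin d → Fin k)
    (hc : Function.Injective fun x => Setoid.ker (c x)) : Fintype.card ι ≤ 2 ^ M := by
  obtain ⟨Dec, hDec⟩ := h.exists_decoder
  choose s hs using fun x => hDec (coordDB 4 (c x))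
  have hs_inj : Function.Injective s := fun x y hxy => hc <| Setoid.ext fun a t => by
    by_cases hat : a = t
    · simp [hat]
    · rw [Setoid.ker_def, Setoid.ker_def, ← (hs x).apply_eq_true_iff_coordDB hat,
        ← (hs y).apply_eq_true_iff_coordDB hat, hxy]
  simpa using Fintype.card_le_of_injective s hs_inj

theorem IFIScheme.one_le {d M : ℕ} (h : IFIScheme d (4 ^ d) M (1 / 8)) (hd : 2 ≤ d) : 1 ≤ M := by
  have hker : Setoid.ker (fun _ => ⟨0, by omega⟩ : Fin d → Fin d) ≠ Setoid.ker id := by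
    intro hker
    have := Setoid.ext_iff.mp hker ⟨0, by omega⟩ ⟨1, by omega⟩
    simp [Setoid.ker_def] at this
  have := h.card_le_of_injective_ker (fun x : Bool => if x then id else fun _ => ⟨0, by omega⟩)
    (Bool.injective_iff.mpr (by simpa using hker))
  rw [Fintype.card_bool] at this
  exact Nat.one_le_iff_ne_zero.mpr (Nat.one_lt_two_pow_iff.mp this)

/-- Identifies item `m + j` with item `σ⁻¹ j` for `j < m` and fixes every other item. -/
def permIdentify {d : ℕ} (m : ℕ) (σ : Equiv.Perm (Fin m)) (t : Fin d) : Fin d :=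
  if h : m ≤ t ∧ t < 2 * m then
    ⟨σ.symm ⟨t - m, by omega⟩, ((σ.symm _).isLt.trans_le h.1).trans t.isLt⟩
  else t

theorem permIdentify_of_lt {d m : ℕ} (σ : Equiv.Perm (Fin m)) {t : ℕ} (ht : t < m) (h : t < d) :
    permIdentify m σ (⟨t, h⟩ : Fin d) = ⟨t, h⟩ :=
  dif_neg fun h' => by simp at h'; omega

theorem permIdentify_add {d m : ℕ} (σ : Equiv.Perm (Fin m)) (j : Fin m) (h : m + j < d) :
    permIdentify m σ (⟨m + j, h⟩ : Fin d) = ⟨σ.symm j, by omega⟩ := by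
  rw [permIdentify, dif_pos (show m ≤ m + j ∧ m + j < 2 * m by omega)]
  simp

theorem permIdentify_injective_ker {d m : ℕ} (hm : 2 * m ≤ d) :
    Function.Injective fun σ : Equiv.Perm (Fin m) => Setoid.ker (permIdentify (d := d) m σ) := by
  refine fun σ τ hστ => Equiv.ext fun i => ?_
  have hker := Setoid.ext_iff.mp hστ ⟨m + σ i, by omega⟩ ⟨i, by omega⟩
  simp only [Setoid.ker_def, permIdentify_add, permIdentify_of_lt _ i.isLt] at hker
  exact τ.symm_apply_eq.mp (by simpa [Fin.ext_iff] using hker)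

theorem IFIScheme.factorial_le_two_pow {d m M : ℕ} (h : IFIScheme d (4 ^ d) M (1 / 8))
    (hm : 2 * m ≤ d) : m ! ≤ 2 ^ M := by
  simpa [Fintype.card_perm] using h.card_le_of_injective_ker _ (permIdentify_injective_ker hm)

theorem pow_le_factorial_two_mul (q : ℕ) : (q + 1) ^ q ≤ (2 * q)! :=
  calc (q + 1) ^ q ≤ q ! * (q + 1) ^ q := Nat.le_mul_of_pos_left _ q.factorial_pos
    _ ≤ (q + q)! := Nat.factorial_mul_pow_le_factorial
    _ = (2 * q)! := by rw [two_mul]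

theorem mul_log_le_of_factorial_le {d M : ℕ} (hd : 12 ≤ d) (h : (2 * (d / 4))! ≤ 2 ^ M) :
    d * log d ≤ 16 * M := by
  set q := d / 4
  have hq : (3 : ℝ) ≤ q := by exact_mod_cast (by omega : 3 ≤ q)
  have hdq : (d : ℝ) ≤ 4 * (q + 1) := by exact_mod_cast (by omega : d ≤ 4 * (q + 1))
  have hqM : q * log (q + 1) ≤ M := by
    have hpow : ((q + 1 : ℕ) : ℝ) ^ q ≤ (2 : ℝ) ^ M := by
      exact_mod_cast (pow_le_factorial_two_mul q).trans h
    have := log_le_log (by positivity) hpow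
    rw [log_pow, log_pow] at this
    push_cast at this
    nlinarith [log_two_lt_d9, (by positivity : (0 : ℝ) ≤ M)]
  have hlog : log d ≤ 2 * log (q + 1) :=
    calc log d ≤ log ((q + 1) ^ 2) := log_le_log (by positivity) (by nlinarith)
      _ = 2 * log (q + 1) := by rw [log_pow, Nat.cast_ofNat]
  calc (d : ℝ) * log d ≤ (8 * q) * (2 * log (q + 1)) :=
        mul_le_mul (by linarith) hlog (log_natCast_nonneg d) (by positivity)
    _ = 16 * (q * log (q + 1)) := by ring
    _ ≤ 16 * M := by linarith

theorem itemset_frequency_indicator_lower_bound_const_eps :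
    ∃ c : ℝ, c > 0 ∧
      ∀ (d M : ℕ), 2 ≤ d →
        (∀ n : ℕ, IFIScheme d n M (1 / 8)) →
        (M : ℝ) ≥ c * (d : ℝ) * Real.log d := by
  refine ⟨1 / 121, by norm_num, fun d M hd h => ?_⟩
  suffices (d : ℝ) * log d ≤ 121 * M by linarith
  rcases lt_or_ge d 12 with hsmall | hlarge
  · have hM : (1 : ℝ) ≤ M := by exact_mod_cast (h _).one_le hd
    have hd' : (d : ℝ) ≤ 11 := by exact_mod_cast (by omega : d ≤ 11)
    calc (d : ℝ) * log d ≤ d * d :=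
          mul_le_mul_of_nonneg_left (log_le_self d.cast_nonneg) d.cast_nonneg
      _ ≤ 121 * M := by nlinarith
  · have := mul_log_le_of_factorial_le hlarge ((h _).factorial_le_two_pow (by omega))
    linarith [(by positivity : (0 : ℝ) ≤ M)]
end

section
/- There is a constant C > 0 with the following property. For every integer m ≥ 2 and every permutation Π of Fin m, if n ≥ C · log m and S₁, …, Sₙ are independent uniformly random subsets of Fin m, then with probability at least 3/4, for every pair i, j : Fin m with j ≠ Π(i), the number of indices t with i ∈ Sₜ and Π⁻¹(j) ∉ Sₜ is at least n/8. -/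
/-!
Fix `i` and `b = π⁻¹ j ≠ i`. A uniformly random subset contains `i` and misses `b` with
probability `1/4`, so the number of good indices `t` is a sum of `n` independent Bernoulli
variables of mean at least `1/4`. The exponential-moment (Chernoff) bound with parameter
`c = 9/10` makes the probability that fewer than `n/8` indices are good at most `(24/25)^n`,
because `(3 + c⁸) / (4c) ≤ 24/25`. A union bound over the at most `m²` pairs `(i, b)` gives
failure probability at most `m² (24/25)^n ≤ m⁻² ≤ 1/4` once `n ≥ 100 log m`.
-/

open Finset
open scoped ENNReal

theorem PMF.one_sub_le_toOuterMeasure_of_compl_le {α : Type*} (p : PMF α) {s : Set α} {ε : ℝ≥0∞}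
    (h : p.toOuterMeasure sᶜ ≤ ε) : 1 - ε ≤ p.toOuterMeasure s := by
  refine tsub_le_iff_right.mpr ?_
  calc 1 = p.toOuterMeasure (s ∪ sᶜ) := by
        rw [Set.union_compl_self, (p.toOuterMeasure_apply_eq_one_iff _).mpr (Set.subset_univ _)]
    _ ≤ p.toOuterMeasure s + p.toOuterMeasure sᶜ := MeasureTheory.measure_union_le s sᶜ
    _ ≤ p.toOuterMeasure s + ε := by gcongr

theorem card_finset_le_four_mul_card_filter_mem_and_notMem {α : Type*} [Fintype α]
    [DecidableEq α] {i b : α} (hib : i ≠ b) :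
    Fintype.card (Finset α) ≤ 4 * #{s : Finset α | i ∈ s ∧ b ∉ s} := by
  have hcard : Fintype.card α = #({i, b} : Finset α)ᶜ + 2 := by
    rw [← card_pair hib, card_compl_add_card]
  have hi : ∀ s ∈ ({i, b} : Finset α)ᶜ.powerset, i ∉ s := fun s hs h => by
    simpa using mem_powerset.mp hs h
  have hinj : Set.InjOn (insert i) (({i, b} : Finset α)ᶜ.powerset : Set (Finset α)) :=
    fun s hs s' hs' h => by rw [← erase_insert (hi s hs), h, erase_insert (hi s' hs')]
  calc Fintype.card (Finset α) = 4 * #({i, b} : Finset α)ᶜ.powerset := by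
        rw [Fintype.card_finset, card_powerset, hcard, pow_add]; ring
    _ ≤ 4 * #{s : Finset α | i ∈ s ∧ b ∉ s} := by
        refine Nat.mul_le_mul_left 4 (card_le_card_of_injOn (insert i) (fun s hs => ?_) hinj)
        have hb : b ∉ s := fun h => by simpa using mem_powerset.mp hs h
        simp [hib.symm, hb]

theorem sum_pow_card_filter {ι α R : Type*} [Fintype ι] [DecidableEq ι] [Fintype α]
    [CommSemiring R] (p : α → Prop) [DecidablePred p] (x : R) :
    ∑ S : ι → α, x ^ #{t | p (S t)} = (∑ a, if p a then x else 1) ^ Fintype.card ι := by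
  rw [← card_univ, ← prod_const, Fintype.prod_sum]
  refine Fintype.sum_congr _ _ fun S => ?_
  rw [prod_ite, prod_const, prod_const_one, mul_one]

theorem card_filter_eight_mul_card_lt_le {ι α : Type*} [Fintype ι] [DecidableEq ι] [Fintype α]
    (p : α → Prop) [DecidablePred p] (hp : Fintype.card α ≤ 4 * #{a | p a}) :
    (#{S : ι → α | 8 * #{t | p (S t)} < Fintype.card ι} : ℝ) ≤
      (24 / 25 * Fintype.card α) ^ Fintype.card ι := by
  set n := Fintype.card ι
  set c : ℝ := 9 / 10 with hc
  have markov : #{S : ι → α | 8 * #{t | p (S t)} < n} * c ^ n ≤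
      ∑ S : ι → α, (c ^ 8) ^ #{t | p (S t)} := by
    rw [← nsmul_eq_mul, ← sum_const]
    refine (sum_le_sum fun S hS => ?_).trans
      (sum_le_sum_of_subset_of_nonneg (filter_subset _ _) fun _ _ _ => by positivity)
    rw [← pow_mul]
    exact pow_le_pow_of_le_one (by norm_num) (by norm_num) (mem_filter.mp hS).2.le
  have one_sample : ∑ a, (if p a then c ^ 8 else 1) ≤ (3 + c ^ 8) / 4 * Fintype.card α := by
    have hpR : (Fintype.card α : ℝ) ≤ 4 * #{a | p a} := by exact_mod_cast hp
    have hsplit : (#{a | p a} : ℝ) + #{a | ¬p a} = Fintype.card α := by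
      exact_mod_cast card_univ (α := α) ▸ card_filter_add_card_filter_not (s := univ) p
    have hc8 : c ^ 8 ≤ 1 := by norm_num [hc]
    rw [sum_ite, sum_const, sum_const, nsmul_eq_mul, nsmul_one]
    nlinarith [mul_nonneg (sub_nonneg.mpr hc8) (sub_nonneg.mpr hpR)]
  refine le_of_mul_le_mul_right ?_ (by positivity : 0 < c ^ n)
  calc _ ≤ ((3 + c ^ 8) / 4 * Fintype.card α) ^ n := by
        rw [sum_pow_card_filter] at markov
        exact markov.trans (pow_le_pow_left₀ (sum_nonneg fun a _ => by positivity) one_sample n)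
    _ = ((3 + c ^ 8) / (4 * c) * Fintype.card α) ^ n * c ^ n := by
        rw [← mul_pow]; congr 1; field_simp
    _ ≤ _ := by
        have hq : (3 + c ^ 8) / (4 * c) ≤ 24 / 25 := by norm_num [hc]
        gcongr

theorem toOuterMeasure_uniformOfFintype_eight_mul_card_lt_le {ι α : Type*} [Fintype ι] [DecidableEq ι]
    [Fintype α] [Nonempty α] (p : α → Prop) [DecidablePred p]
    (hp : Fintype.card α ≤ 4 * #{a | p a}) :
    (PMF.uniformOfFintype (ι → α)).toOuterMeasure {S | 8 * #{t | p (S t)} < Fintype.card ι} ≤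
      (24 / 25) ^ Fintype.card ι := by
  have hcount := card_filter_eight_mul_card_lt_le (ι := ι) p hp
  rw [PMF.toOuterMeasure_uniformOfFintype_apply, Fintype.card_fun]
  refine ENNReal.div_le_of_le_mul ?_
  have := ENNReal.ofReal_le_ofReal hcount
  rw [mul_pow, ENNReal.ofReal_mul (by positivity), ENNReal.ofReal_pow (by positivity),
    ENNReal.ofReal_pow (by positivity), ENNReal.ofReal_natCast, ENNReal.ofReal_natCast,
    ENNReal.ofReal_div_of_pos (by norm_num), ENNReal.ofReal_ofNat, ENNReal.ofReal_ofNat] at this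
  simpa using this

theorem sq_mul_pow_le_quarter {m n : ℕ} (hm : 2 ≤ m) (hn : 100 * Real.log m ≤ n) :
    (m : ℝ≥0∞) ^ 2 * (24 / 25) ^ n ≤ 1 / 4 := by
  suffices h : (m : ℝ) ^ 2 * (24 / 25) ^ n ≤ 1 / 4 by
    have := ENNReal.ofReal_le_ofReal h
    rwa [ENNReal.ofReal_mul (by positivity), ENNReal.ofReal_pow (by positivity),
      ENNReal.ofReal_pow (by positivity), ENNReal.ofReal_natCast,
      ENNReal.ofReal_div_of_pos (by norm_num), ENNReal.ofReal_div_of_pos (by norm_num),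
      ENNReal.ofReal_ofNat, ENNReal.ofReal_ofNat, ENNReal.ofReal_ofNat, ENNReal.ofReal_one] at this
  have hm2 : (2 : ℝ) ≤ m := by exact_mod_cast hm
  have hexp_log : Real.exp (4 * Real.log m) = (m : ℝ) ^ 4 := by
    rw [show (4 : ℝ) * Real.log m = Real.log ((m : ℝ) ^ 4) by rw [Real.log_pow]; push_cast; ring,
      Real.exp_log (by positivity)]
  have hpow : (24 / 25 : ℝ) ^ n ≤ ((m : ℝ) ^ 4)⁻¹ :=
    calc (24 / 25 : ℝ) ^ n ≤ Real.exp (-1 / 25) ^ n :=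
          pow_le_pow_left₀ (by norm_num) (by linarith [Real.add_one_le_exp (-1 / 25)]) n
      _ = Real.exp (-(n / 25)) := by rw [← Real.exp_nat_mul]; ring_nf
      _ ≤ Real.exp (-(4 * Real.log m)) := Real.exp_le_exp.mpr (by linarith)
      _ = ((m : ℝ) ^ 4)⁻¹ := by rw [Real.exp_neg, hexp_log]
  calc (m : ℝ) ^ 2 * (24 / 25) ^ n ≤ (m : ℝ) ^ 2 * ((m : ℝ) ^ 4)⁻¹ := by gcongr
    _ = ((m : ℝ) ^ 2)⁻¹ := by field_simp
    _ ≤ 1 / 4 := by rw [one_div]; gcongr; nlinarith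

theorem compl_setOf_many_mem_and_notMem_subset {α : Type*} [Fintype α] [DecidableEq α] {n : ℕ}
    (π : Equiv.Perm α) :
    {S : Fin n → Finset α | ∀ i j : α, j ≠ π i →
      (n : ℝ) / 8 ≤ (#{t | i ∈ S t ∧ π.symm j ∉ S t} : ℝ)}ᶜ ⊆
      ⋃ x ∈ (univ : Finset α).offDiag, {S | 8 * #{t | x.1 ∈ S t ∧ x.2 ∉ S t} < n} := by
  intro S hS
  simp only [Set.mem_compl_iff, Set.mem_ofPred_eq, not_forall, not_le] at hS
  obtain ⟨i, j, hij, hlt⟩ := hS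
  simp only [Set.mem_iUnion, mem_offDiag, mem_univ, true_and, Set.mem_ofPred_eq]
  refine ⟨(i, π.symm j), fun h => hij (π.eq_symm_apply.mp h).symm, ?_⟩
  exact_mod_cast (by linarith : (8 * #{t | i ∈ S t ∧ π.symm j ∉ S t} : ℝ) < n)

/-- Chernoff plus union bound: there is a constant `C > 0` such that for every `m ≥ 2`,
every permutation `π` of `Fin m`, and every `n ≥ C · log m`, if `S₁, …, Sₙ` are independent
uniformly random subsets of `Fin m`, then with probability at least `3/4`, for every pair
`i, j` with `j ≠ π i`, at least `n/8` of the sets `Sₜ` satisfy `i ∈ Sₜ` and `π⁻¹ j ∉ Sₜ`. -/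
theorem many_good_rows_whp :
    ∃ C : ℝ, C > 0 ∧
      ∀ (m : ℕ), 2 ≤ m → ∀ (π : Equiv.Perm (Fin m)) (n : ℕ),
        (n : ℝ) ≥ C * Real.log m →
        (3 / 4 : ENNReal) ≤
          (PMF.uniformOfFintype (Fin n → Finset (Fin m))).toOuterMeasure
            {S | ∀ i j : Fin m, j ≠ π i →
              (n : ℝ) / 8 ≤
                ((Finset.univ.filter (fun t : Fin n => i ∈ S t ∧ π.symm j ∉ S t)).card : ℝ)} := by
  refine ⟨100, by norm_num, fun m hm π n hn => ?_⟩
  refine le_trans ?_ (PMF.one_sub_le_toOuterMeasure_of_compl_le _ (ε := 1 / 4) ?_)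
  · exact ((ENNReal.toReal_eq_toReal_iff' (by finiteness) (by finiteness)).mp (by norm_num)).le
  set μ := (PMF.uniformOfFintype (Fin n → Finset (Fin m))).toOuterMeasure
  calc _ ≤ ∑ x ∈ (univ : Finset (Fin m)).offDiag, μ {S | 8 * #{t | x.1 ∈ S t ∧ x.2 ∉ S t} < n} :=
        (MeasureTheory.measure_mono (compl_setOf_many_mem_and_notMem_subset π)).trans
          (MeasureTheory.measure_biUnion_finset_le _ _)
    _ ≤ ∑ x ∈ (univ : Finset (Fin m)).offDiag, (24 / 25) ^ n := sum_le_sum fun x hx => by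
        simpa only [Fintype.card_fin] using
          toOuterMeasure_uniformOfFintype_eight_mul_card_lt_le (ι := Fin n) _
          (card_finset_le_four_mul_card_filter_mem_and_notMem (mem_offDiag.mp hx).2.2)
    _ ≤ (m : ℝ≥0∞) ^ 2 * (24 / 25) ^ n := by
        rw [sum_const, nsmul_eq_mul]
        gcongr
        exact_mod_cast (card_le_univ _).trans_eq (by simp [sq])
    _ ≤ 1 / 4 := sq_mul_pow_le_quarter hm hn
end

section
/- There is a constant C > 0 with the following property. For every integer m ≥ 2 there exists n ≤ C · log m such that for every permutation Π of Fin m there is a database D_Π : Fin n → Fin (2m) → Bool, each of whose rows equals v_S for some S ⊆ Fin m, satisfying: for all i, j : Fin m, f_{{i, m+j}}(D_Π) = 0 if j = Π(i), and f_{{i, m+j}}(D_Π) ≥ 1/8 if j ≠ Π(i). In particular, the map Π ↦ D_Π is injective on permutations of Fin m. -/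
/-- The row `v_S` associated to a subset `S ⊆ Fin m` and a permutation `π` of `Fin m`:
the first half is the indicator of `S`, and the second half is the indicator of the image
under `π` of the complement of `S` (coordinate `m + j` is true iff `π⁻¹ j ∉ S`). -/
def vrow (m : ℕ) (π : Equiv.Perm (Fin m)) (S : Finset (Fin m)) : Fin (2 * m) → Bool :=
  fun x =>
    if h : (x : ℕ) < m then
      decide ((⟨(x : ℕ), h⟩ : Fin m) ∈ S)
    else
      decide (π.symm ⟨(x : ℕ) - m, by have := x.isLt; omega⟩ ∉ S)

open Finset

lemma pow_mul_sum_range_choose_le {b : ℕ} (hb : 0 < b) (n k : ℕ) (hk : k ≤ n + 1) :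
    b ^ (n - k) * ∑ s ∈ range k, n.choose s ≤ (b + 1) ^ n := by
  rw [mul_sum]
  calc ∑ s ∈ range k, b ^ (n - k) * n.choose s
      ≤ ∑ s ∈ range (n + 1), 1 ^ s * b ^ (n - s) * n.choose s := by
        refine (sum_le_sum_of_subset_of_nonneg (range_subset_range.mpr hk)
          fun _ _ _ => by positivity).trans' (sum_le_sum fun s hs => ?_)
        rw [one_pow, one_mul]
        exact Nat.mul_le_mul_right _ (Nat.pow_le_pow_right hb (by have := mem_range.mp hs; omega))
    _ = (1 + b) ^ n := by simp [add_pow]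
    _ = (b + 1) ^ n := by rw [add_comm]

section Hamming

variable {ι : Type*} [Fintype ι] [DecidableEq ι]

lemma card_filter_hammingDist_lt_le (u : ι → Bool) (d : ℕ) :
    #{v | hammingDist u v < d} ≤ ∑ s ∈ range d, (Fintype.card ι).choose s := by
  calc #{v | hammingDist u v < d}
      ≤ #((range d).biUnion fun s => powersetCard s (univ : Finset ι)) := by
        refine card_le_card_of_injOn (fun v => ({t | u t ≠ v t} : Finset ι)) (fun v hv => ?_)
          fun v _ w _ h => ?_
        · simpa [mem_biUnion, mem_powersetCard, hammingDist] using hv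
        · funext t
          have := congrArg (t ∈ ·) h
          simp only [mem_filter, mem_univ, true_and, eq_iff_iff] at this
          revert this
          cases u t <;> cases v t <;> cases w t <;> decide
    _ ≤ ∑ s ∈ range d, #(powersetCard s (univ : Finset ι)) := card_biUnion_le
    _ = ∑ s ∈ range d, (Fintype.card ι).choose s := by simp

theorem exists_code_of_mul_sum_choose_le {d m : ℕ} (hd : 0 < d)
    (hm : m * ∑ s ∈ range d, (Fintype.card ι).choose s ≤ 2 ^ Fintype.card ι) :
    ∃ C : Finset (ι → Bool), #C = m ∧
      (C : Set (ι → Bool)).Pairwise fun u v => d ≤ hammingDist u v := by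
  induction m with
  | zero => exact ⟨∅, rfl, by simp⟩
  | succ m ih =>
    obtain ⟨C, hCcard, hC⟩ := ih (le_trans (by gcongr; omega) hm)
    obtain ⟨v, hv⟩ : ∃ v, ∀ u ∈ C, d ≤ hammingDist u v := by
      by_contra! hcover
      have : 2 ^ Fintype.card ι ≤ m * ∑ s ∈ range d, (Fintype.card ι).choose s :=
        calc 2 ^ Fintype.card ι = #(univ : Finset (ι → Bool)) := by simp
          _ ≤ #(C.biUnion fun u => ({v | hammingDist u v < d} : Finset (ι → Bool))) :=
            card_le_card fun v _ => by simpa using hcover v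
          _ ≤ ∑ u ∈ C, #{v | hammingDist u v < d} := card_biUnion_le
          _ ≤ ∑ _u ∈ C, ∑ s ∈ range d, (Fintype.card ι).choose s :=
            sum_le_sum fun u _ => card_filter_hammingDist_lt_le u d
          _ = m * ∑ s ∈ range d, (Fintype.card ι).choose s := by simp [hCcard]
      have := Nat.one_le_two_pow (n := Fintype.card ι)
      nlinarith
    have hvC : v ∉ C := fun hvC => by simpa using (hv v hvC).trans_lt' hd
    refine ⟨insert v C, by rw [card_insert_of_notMem hvC, hCcard], ?_⟩
    rw [coe_insert, Set.pairwise_insert]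
    exact ⟨hC, fun u hu _ => ⟨hammingDist_comm u v ▸ hv u hu, hv u hu⟩⟩

end Hamming

theorem exists_code_of_le_two_pow {m j : ℕ} (hj : 0 < j) (hm : m ≤ 2 ^ j) :
    ∃ c : Fin m → Fin (8 * j) → Bool, Pairwise fun a b => 2 * j ≤ hammingDist (c a) (c b) := by
  set V := ∑ s ∈ range (2 * j), (8 * j).choose s
  have hV : 729 ^ j * V ≤ 65536 ^ j := by
    have := pow_mul_sum_range_choose_le (b := 3) (by norm_num) (8 * j) (2 * j) (by omega)
    rwa [show 8 * j - 2 * j = 6 * j by omega, pow_mul, pow_mul] at this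
  have hmV : m * V ≤ 2 ^ (8 * j) := by
    refine Nat.le_of_mul_le_mul_right ?_ (by positivity : 0 < 729 ^ j)
    calc m * V * 729 ^ j = m * (V * 729 ^ j) := mul_assoc ..
      _ ≤ 2 ^ j * 65536 ^ j := Nat.mul_le_mul hm (by rwa [mul_comm])
      _ = (2 * 65536) ^ j := (mul_pow ..).symm
      _ ≤ (2 ^ 8 * 729) ^ j := Nat.pow_le_pow_left (by norm_num) j
      _ = 2 ^ (8 * j) * 729 ^ j := by rw [mul_pow, pow_mul]
  obtain ⟨C, hCcard, hC⟩ :=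
    exists_code_of_mul_sum_choose_le (ι := Fin (8 * j)) (d := 2 * j) (by omega) (by simpa using hmV)
  let e := C.equivFinOfCardEq hCcard
  exact ⟨fun a => e.symm a, fun a b hab =>
    hC (e.symm a).2 (e.symm b).2 fun h => hab (e.symm.injective (Subtype.ext h))⟩

def pairItems (m : ℕ) (i j : Fin m) : Finset (Fin (2 * m)) :=
  {⟨i, by omega⟩, ⟨m + j, by omega⟩}

lemma forall_mem_pairItems_vrow {m : ℕ} (π : Equiv.Perm (Fin m)) (S : Finset (Fin m))
    (i j : Fin m) : (∀ x ∈ pairItems m i j, vrow m π S x = true) ↔ i ∈ S ∧ π.symm j ∉ S := by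
  simp [pairItems, vrow]

lemma freq_comp_equiv {ι : Type*} [Fintype ι] {n d : ℕ} (D : ι → Fin d → Bool) (e : Fin n ≃ ι)
    (T : Finset (Fin d)) : freq (D ∘ e) T = #{r | ∀ x ∈ T, D r x = true} / n := by
  rw [freq, card_equiv e (t := {r | ∀ x ∈ T, D r x = true}) (by simp)]

lemma injective_of_freq_pairItems {m n : ℕ}
    {D : Equiv.Perm (Fin m) → Fin n → Fin (2 * m) → Bool}
    (h_eq : ∀ π i, freq (D π) (pairItems m i (π i)) = 0)
    (h_ne : ∀ π i j, j ≠ π i → 0 < freq (D π) (pairItems m i j)) : Function.Injective D := by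
  intro π σ h
  by_contra hne
  obtain ⟨i, hi⟩ := not_forall.mp (mt Equiv.ext hne)
  have := h_ne π i (σ i) (Ne.symm hi)
  rw [h, h_eq] at this
  exact this.false

section CodeDatabase

variable {ι : Type*} [Fintype ι] {m : ℕ}

def codeDatabase (π : Equiv.Perm (Fin m)) (c : Fin m → ι → Bool) (r : Bool × ι) :
    Fin (2 * m) → Bool :=
  vrow m π {a | c a r.2 = r.1}

lemma card_filter_eq_and_ne_eq_hammingDist (u v : ι → Bool) :
    #{r : Bool × ι | u r.2 = r.1 ∧ v r.2 ≠ r.1} = hammingDist u v :=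
  card_nbij' Prod.snd (fun t => (u t, t)) (fun r hr => by grind)
    (fun t ht => by grind) (fun r hr => by grind) (fun _ _ => rfl)

lemma freq_codeDatabase_comp_pairItems {n : ℕ} (π : Equiv.Perm (Fin m)) (c : Fin m → ι → Bool)
    (e : Fin n ≃ Bool × ι) (i j : Fin m) :
    freq (codeDatabase π c ∘ e) (pairItems m i j) = hammingDist (c i) (c (π.symm j)) / n := by
  simp only [freq_comp_equiv, codeDatabase, forall_mem_pairItems_vrow, mem_filter, mem_univ,
    true_and, card_filter_eq_and_ne_eq_hammingDist]

end CodeDatabase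

lemma natLog_two_add_one_le_log {m : ℕ} (hm : 2 ≤ m) :
    (Nat.log 2 m + 1 : ℝ) ≤ 3 * Real.log m := by
  have hL : (1 : ℝ) ≤ Nat.log 2 m := by exact_mod_cast Nat.log_pos one_lt_two hm
  have hlogb := Real.natLog_le_logb m 2
  rw [Real.logb, Nat.cast_ofNat, le_div_iff₀ (Real.log_pos one_lt_two)] at hlogb
  nlinarith [Real.log_two_gt_d9]

/-- There is a constant `C > 0` such that for every `m ≥ 2` there is a number of rows
`n ≤ C · log m` and, for each permutation `π` of `Fin m`, a database `D_π` with `n` rows,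
each row of the form `v_S`, whose pairwise frequencies `f_{{i, m+j}}` are `0` when
`j = π i` and at least `1/8` when `j ≠ π i`; moreover `π ↦ D_π` is injective. -/
theorem encode_permutation_in_database :
    ∃ C : ℝ, C > 0 ∧
      ∀ m : ℕ, 2 ≤ m →
        ∃ n : ℕ, (n : ℝ) ≤ C * Real.log m ∧
          ∃ Dmap : Equiv.Perm (Fin m) → (Fin n → Fin (2 * m) → Bool),
            Function.Injective Dmap ∧
            ∀ π : Equiv.Perm (Fin m),
              (∀ t : Fin n, ∃ S : Finset (Fin m), Dmap π t = vrow m π S) ∧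
              ∀ i j : Fin m,
                (j = π i →
                  freq (Dmap π) {⟨(i : ℕ), by have := i.isLt; omega⟩,
                    ⟨m + (j : ℕ), by have := j.isLt; omega⟩} = 0) ∧
                (j ≠ π i →
                  freq (Dmap π) {⟨(i : ℕ), by have := i.isLt; omega⟩,
                    ⟨m + (j : ℕ), by have := j.isLt; omega⟩} ≥ 1 / 8) := by
  refine ⟨48, by norm_num, fun m hm => ?_⟩
  set k := Nat.log 2 m + 1 with hk
  obtain ⟨c, hc⟩ := exists_code_of_le_two_pow (j := k) (Nat.succ_pos _)
    (Nat.lt_pow_succ_log_self one_lt_two m).le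
  let e : Fin (16 * k) ≃ Bool × Fin (8 * k) := (Fintype.equivFinOfCardEq (by
    rw [Fintype.card_prod, Fintype.card_bool, Fintype.card_fin]; ring)).symm
  let D π := codeDatabase π c ∘ e
  have h_eq (π : Equiv.Perm (Fin m)) (i : Fin m) : freq (D π) (pairItems m i (π i)) = 0 := by
    simp [D, freq_codeDatabase_comp_pairItems]
  have h_ne (π : Equiv.Perm (Fin m)) (i j : Fin m) (h : j ≠ π i) :
      1 / 8 ≤ freq (D π) (pairItems m i j) := by
    have hdist : (2 * k : ℝ) ≤ hammingDist (c i) (c (π.symm j)) := by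
      exact_mod_cast hc fun hi => h (by simp [hi])
    rw [freq_codeDatabase_comp_pairItems, le_div_iff₀ (by positivity)]
    push_cast
    linarith
  refine ⟨16 * k, ?_, D,
    injective_of_freq_pairItems h_eq fun π i j h => by linarith [h_ne π i j h],
    fun π => ⟨fun t => ⟨_, rfl⟩, fun i j => ⟨fun h => ?_, h_ne π i j⟩⟩⟩
  · rw [hk]
    push_cast
    linarith [natLog_two_add_one_le_log hm]
  · subst h
    exact h_eq π i
end

section
/- Let m, r be positive integers, d = 2·m·r, and fix permutations Π_{k,l} of Fin m for k, l ∈ Fin r. For every k, l ∈ Fin r, every i : Fin m, every k' ∈ Fin r and every S ⊆ Fin m, if j = Π_{k,l}(i) then it is not the case that both v_{k',S}(k·m + i) = true and v_{k',S}(m·r + l·m + j) = true. Consequently, for any database D all of whose rows are of the form v_{k',S}, the frequency f_{T_{k,l}(i, Π_{k,l}(i))}(D) = 0. -/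
/-- The coordinate `k·m + i` (in the first half) of `Fin (2·m·r)`. -/
def idxL (m r : ℕ) (k : Fin r) (i : Fin m) : Fin (2 * m * r) :=
  ⟨(k : ℕ) * m + (i : ℕ), by
    have h1 : ((k : ℕ) + 1) * m ≤ r * m := Nat.mul_le_mul (Nat.succ_le_of_lt k.isLt) (le_refl m)
    have h2 : (i : ℕ) < m := i.isLt
    nlinarith⟩

/-- The coordinate `m·r + l·m + j` (in the second half) of `Fin (2·m·r)`. -/
def idxR (m r : ℕ) (l : Fin r) (j : Fin m) : Fin (2 * m * r) :=
  ⟨m * r + (l : ℕ) * m + (j : ℕ), by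
    have h1 : ((l : ℕ) + 1) * m ≤ r * m := Nat.mul_le_mul (Nat.succ_le_of_lt l.isLt) (le_refl m)
    have h2 : (j : ℕ) < m := j.isLt
    nlinarith⟩

/-- The row `v_{k,S}` associated to a block `k ∈ Fin r`, a subset `S ⊆ Fin m`, and a family
of permutations `π k l` of `Fin m`: on the first half, coordinate `k·m + i` is true iff
`i ∈ S` (and coordinates outside block `k` are false); on the second half, coordinate
`m·r + l·m + j` is true iff `(π k l)⁻¹ j ∉ S`. -/
def vrow2 (m r : ℕ) (hm : 0 < m) (π : Fin r → Fin r → Equiv.Perm (Fin m)) (k : Fin r)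
    (S : Finset (Fin m)) : Fin (2 * m * r) → Bool :=
  fun x =>
    if h : (x : ℕ) < m * r then
      decide ((x : ℕ) / m = (k : ℕ)) &&
        decide ((⟨(x : ℕ) % m, Nat.mod_lt _ hm⟩ : Fin m) ∈ S)
    else
      decide
        ((π k ⟨((x : ℕ) - m * r) / m, by
            have hx := x.isLt
            have h2 : 2 * m * r = m * r + m * r := by ring
            have h3 : r * m = m * r := Nat.mul_comm r m
            exact (Nat.div_lt_iff_lt_mul hm).mpr (by omega)⟩).symm
          ⟨((x : ℕ) - m * r) % m, Nat.mod_lt _ hm⟩ ∉ S)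


/-! A row `v_{k',S}` is on at `k·m + i` only when `k' = k` and `i ∈ S`, and then it is on at
`m·r + l·m + Π_{k,l}(i)` exactly when `Π_{k,l}⁻¹(Π_{k,l}(i)) = i ∉ S`. -/

lemma Nat.mul_add_div_of_lt {m a b : ℕ} (hb : b < m) : (a * m + b) / m = a := by
  rw [Nat.mul_comm, Nat.mul_add_div (Nat.zero_lt_of_lt hb), Nat.div_eq_of_lt hb, Nat.add_zero]

lemma idxL_lt {m r : ℕ} (k : Fin r) (i : Fin m) : (idxL m r k i : ℕ) < m * r := by
  have : ((k : ℕ) + 1) * m ≤ r * m := Nat.mul_le_mul_right m k.isLt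
  change (k : ℕ) * m + i < m * r
  nlinarith [i.isLt]

section Rows

variable {m r : ℕ} (hm : 0 < m) (π : Fin r → Fin r → Equiv.Perm (Fin m)) (k : Fin r)
  (S : Finset (Fin m))

lemma vrow2_idxL (k' : Fin r) (i : Fin m) :
    vrow2 m r hm π k S (idxL m r k' i) = (decide (k' = k) && decide (i ∈ S)) := by
  have hdiv : (k' * m + i : ℕ) / m = k' := Nat.mul_add_div_of_lt i.isLt
  have hmod : (⟨(k' * m + i : ℕ) % m, Nat.mod_lt _ hm⟩ : Fin m) = i :=
    Fin.ext (Nat.mul_add_mod_of_lt i.isLt)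
  rw [vrow2, dif_pos (idxL_lt k' i)]
  simp only [idxL, hdiv, hmod, Fin.val_inj]

lemma vrow2_idxR (l : Fin r) (j : Fin m) :
    vrow2 m r hm π k S (idxR m r l j) = decide ((π k l).symm j ∉ S) := by
  have hsub : (m * r + l * m + j : ℕ) - m * r = l * m + j := by omega
  have hl : ∀ h, (⟨(l * m + j : ℕ) / m, h⟩ : Fin r) = l :=
    fun _ => Fin.ext (Nat.mul_add_div_of_lt j.isLt)
  have hj : (⟨(l * m + j : ℕ) % m, Nat.mod_lt _ hm⟩ : Fin m) = j :=
    Fin.ext (Nat.mul_add_mod_of_lt j.isLt)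
  rw [vrow2, dif_neg (by simp only [idxR]; omega)]
  simp only [idxR, hsub, hl, hj]

lemma not_vrow2_idxL_and_idxR_perm (k' l : Fin r) (i : Fin m) :
    ¬(vrow2 m r hm π k S (idxL m r k' i) = true ∧
      vrow2 m r hm π k S (idxR m r l (π k' l i)) = true) := by
  rw [vrow2_idxL, vrow2_idxR]
  rintro ⟨hL, hR⟩
  simp only [Bool.and_eq_true, decide_eq_true_eq] at hL hR
  obtain ⟨rfl, hi⟩ := hL
  exact hR (by simpa using hi)

end Rows

lemma freq_pair_eq_zero {n d : ℕ} {D : Fin n → Fin d → Bool} {a b : Fin d}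
    (h : ∀ t, ¬(D t a = true ∧ D t b = true)) : freq D {a, b} = 0 := by
  have hempty : Finset.univ.filter (fun t => ∀ j ∈ ({a, b} : Finset (Fin d)), D t j = true) = ∅ :=
    Finset.filter_eq_empty_iff.mpr fun t _ hab => h t ⟨hab a (by simp), hab b (by simp)⟩
  rw [freq, hempty, Finset.card_empty, Nat.cast_zero, zero_div]

theorem vrow2_never_cooccurs_general (m r : ℕ) (hm : 0 < m)
    (π : Fin r → Fin r → Equiv.Perm (Fin m)) :
    (∀ (k l : Fin r) (i : Fin m) (k' : Fin r) (S : Finset (Fin m)),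
      ¬(vrow2 m r hm π k' S (idxL m r k i) = true ∧
        vrow2 m r hm π k' S (idxR m r l (π k l i)) = true)) ∧
    (∀ (n : ℕ) (D : Fin n → Fin (2 * m * r) → Bool),
      (∀ t : Fin n, ∃ (k' : Fin r) (S : Finset (Fin m)), D t = vrow2 m r hm π k' S) →
      ∀ (k l : Fin r) (i : Fin m),
        freq D {idxL m r k i, idxR m r l (π k l i)} = 0) := by
  refine ⟨fun k l i k' S => not_vrow2_idxL_and_idxR_perm hm π k' S k l i,
    fun n D hD k l i => freq_pair_eq_zero fun t => ?_⟩
  obtain ⟨k', S, hrow⟩ := hD t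
  rw [hrow]
  exact not_vrow2_idxL_and_idxR_perm hm π k' S k l i

theorem vrow2_never_cooccurs (m r : ℕ) (hm : 0 < m) (hr : 0 < r)
    (π : Fin r → Fin r → Equiv.Perm (Fin m)) :
    (∀ (k l : Fin r) (i : Fin m) (k' : Fin r) (S : Finset (Fin m)),
      ¬(vrow2 m r hm π k' S (idxL m r k i) = true ∧
        vrow2 m r hm π k' S (idxR m r l (π k l i)) = true)) ∧
    (∀ (n : ℕ) (D : Fin n → Fin (2 * m * r) → Bool),
      (∀ t : Fin n, ∃ (k' : Fin r) (S : Finset (Fin m)), D t = vrow2 m r hm π k' S) →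
      ∀ (k l : Fin r) (i : Fin m),
        freq D {idxL m r k i, idxR m r l (π k l i)} = 0) :=
  vrow2_never_cooccurs_general m r hm π
end
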